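/- For the single-card chain K, starting from the bottom position n, the total variation distance satisfies ‖K^t(n,·) − u‖_TV = (1 − 1/n)^{t+1} for all t ≥ 0. -/

import Mathlib

/-!
The columns of `K` sum to `1` (this rests on `∑_{a=b}^{n-1} ∑_{k>a} 1/k = (n - b) - b ∑_{k>b} 1/k`),
so the uniform distribution `u` is stationary, while the bottom row of `K` is
`(1/n) u + (1 - 1/n) δ_n`. By induction the bottom row of `K^t` is `(1 - c^t) u + c^t δ_n` with
`c = 1 - 1/n`; its distance to `u` is `c^t` times that of `δ_n`, which is `1 - 1/n`.
-/

open Finset Matrix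

noncomputable section

def tailHarmonic (n a : ℕ) : ℝ := ∑ k ∈ Icc (a + 1) n, 1 / (k : ℝ)

lemma tailHarmonic_of_lt {n a : ℕ} (h : a < n) :
    tailHarmonic n a = 1 / (a + 1) + tailHarmonic n (a + 1) := by
  rw [tailHarmonic, ← insert_Icc_add_one_left_eq_Icc h, sum_insert (by simp)]
  push_cast
  rfl

lemma tailHarmonic_pred {n : ℕ} (hn : 0 < n) : tailHarmonic n (n - 1) = 1 / n := by
  rw [tailHarmonic, Nat.sub_add_cancel hn, Icc_self, sum_singleton]

lemma sum_Ico_tailHarmonic {b n : ℕ} (hb : b ≤ n) :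
    ∑ a ∈ Ico b n, tailHarmonic n a = n - b - b * tailHarmonic n b := by
  refine Nat.decreasingInduction (fun k hk ih => ?_) (by simp [tailHarmonic]) hb
  rw [sum_eq_sum_Ico_succ_bot hk, ih, tailHarmonic_of_lt hk]
  push_cast
  field_simp
  ring

lemma sum_range_tailHarmonic_max {b n : ℕ} (hb : b ≤ n) :
    ∑ a ∈ range n, tailHarmonic n (max a b) = n - b := by
  have hlow : ∀ a ∈ range b, tailHarmonic n (max a b) = tailHarmonic n b := fun a ha => by
    rw [max_eq_right (mem_range.1 ha).le]
  have hhigh : ∀ a ∈ Ico b n, tailHarmonic n (max a b) = tailHarmonic n a := fun a ha => by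
    rw [max_eq_left (mem_Ico.1 ha).1]
  rw [← sum_range_add_sum_Ico _ hb, sum_congr rfl hlow, sum_congr rfl hhigh, sum_const,
    card_range, nsmul_eq_mul, sum_Ico_tailHarmonic hb]
  ring

/-- The kernel `K`, its three cases merged through `max`. -/
def singleCardKernel (n : ℕ) : Matrix (Fin n) (Fin n) ℝ :=
  Matrix.of fun i j => tailHarmonic n (max (i : ℕ) j) / n + if i = j then (j : ℝ) / n else 0

lemma singleCardKernel_apply (n : ℕ) (i j : Fin n) : singleCardKernel n i j =
    tailHarmonic n (max (i : ℕ) j) / n + if i = j then (j : ℝ) / n else 0 := rfl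

lemma sum_singleCardKernel_apply {n : ℕ} (j : Fin n) : ∑ i, singleCardKernel n i j = 1 := by
  have hn : (n : ℝ) ≠ 0 := by have := j.pos; positivity
  simp only [singleCardKernel_apply, sum_add_distrib, ← sum_div, sum_ite_eq', mem_univ, if_true]
  rw [Fin.sum_univ_eq_sum_range (fun a => tailHarmonic n (max a j)),
    sum_range_tailHarmonic_max j.isLt.le]
  field_simp
  ring

lemma uniform_vecMul_singleCardKernel (n : ℕ) :
    (fun _ => (n : ℝ)⁻¹) ᵥ* singleCardKernel n = fun _ => (n : ℝ)⁻¹ := by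
  ext j
  simp only [vecMul, dotProduct, ← mul_sum, sum_singleCardKernel_apply, mul_one]

lemma singleCardKernel_bottom_row {n : ℕ} (hn : 0 < n) :
    singleCardKernel n ⟨n - 1, by omega⟩ =
      (n : ℝ)⁻¹ • (fun _ => (n : ℝ)⁻¹) + (1 - (n : ℝ)⁻¹) • Pi.single ⟨n - 1, by omega⟩ 1 := by
  ext j
  have hj : max (n - 1) (j : ℕ) = n - 1 := max_eq_left (by omega)
  rw [singleCardKernel_apply, hj, tailHarmonic_pred hn]
  by_cases hbj : (⟨n - 1, by omega⟩ : Fin n) = j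
  · rw [if_pos hbj, ← hbj]
    simp only [Pi.add_apply, Pi.smul_apply, Pi.single_eq_same, smul_eq_mul,
      Nat.cast_sub (by omega : 1 ≤ n)]
    field_simp
    ring
  · simp only [hbj, ↓reduceIte, add_zero, Pi.add_apply, Pi.smul_apply, smul_eq_mul,
      Pi.single_eq_of_ne (Ne.symm hbj), mul_zero]
    ring

theorem Matrix.pow_row_eq_of_vecMul_eq_self {R ι : Type*} [CommRing R] [Fintype ι]
    [DecidableEq ι]
    {K : Matrix ι ι R} {u : ι → R} (hu : u ᵥ* K = u) {b : ι} {c : R}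
    (hb : K b = (1 - c) • u + c • Pi.single b 1) (t : ℕ) :
    (K ^ t) b = (1 - c ^ t) • u + c ^ t • Pi.single b 1 := by
  induction t with
  | zero =>
    ext j
    simp [one_apply, Pi.single_apply, eq_comm]
  | succ t ih =>
    have hrow : (K ^ (t + 1)) b = (K ^ t) b ᵥ* K := by rw [pow_succ]; rfl
    rw [hrow, ih, add_vecMul, smul_vecMul, smul_vecMul, hu, single_one_vecMul,
      show K.row b = _ from hb]
    ext j
    simp only [Pi.add_apply, Pi.smul_apply, smul_eq_mul]
    ring

lemma sum_abs_single_sub_inv_card {ι : Type*} [Fintype ι] [DecidableEq ι] (b : ι) :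
    ∑ j, |(Pi.single b 1 : ι → ℝ) j - (Fintype.card ι : ℝ)⁻¹| =
      2 * (1 - (Fintype.card ι : ℝ)⁻¹) := by
  have hcard : 1 ≤ Fintype.card ι := Fintype.card_pos_iff.2 ⟨b⟩
  have hoff : ∀ j ∈ univ.erase b, |(Pi.single b 1 : ι → ℝ) j - (Fintype.card ι : ℝ)⁻¹| =
      (Fintype.card ι : ℝ)⁻¹ := fun j hj => by
    rw [Pi.single_eq_of_ne (ne_of_mem_erase hj), zero_sub, abs_neg, abs_of_pos (by positivity)]
  rw [← add_sum_erase _ _ (mem_univ b), sum_congr rfl hoff, sum_const,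
    card_erase_of_mem (mem_univ b), card_univ, Pi.single_eq_same, nsmul_eq_mul,
    abs_of_nonneg (sub_nonneg.2 (inv_le_one_of_one_le₀ (by exact_mod_cast hcard))),
    Nat.cast_sub hcard]
  field_simp
  ring

end

/-- For the single-card chain K of the hit-and-run top-to-random shuffle,
starting from the bottom position n,
‖K^t(n,·) − u‖_TV = (1 − 1/n)^{t+1} for all t ≥ 0. -/
theorem stmt_16 (n : ℕ) (hn : 2 ≤ n) (K : Matrix (Fin n) (Fin n) ℝ)
    (hK : ∀ i j : Fin n,
      K i j =
        if i = j then
          (1 / (n : ℝ)) * ∑ k ∈ Finset.Icc (j.val + 1) n, 1 / (k : ℝ) + (i.val : ℝ) / n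
        else if j < i then (1 / (n : ℝ)) * ∑ k ∈ Finset.Icc (i.val + 1) n, 1 / (k : ℝ)
        else (1 / (n : ℝ)) * ∑ k ∈ Finset.Icc (j.val + 1) n, 1 / (k : ℝ))
    (t : ℕ) :
    (1 / 2) * ∑ j : Fin n, |(K ^ t) (⟨n - 1, by omega⟩ : Fin n) j - 1 / (n : ℝ)| =
      (1 - 1 / (n : ℝ)) ^ (t + 1) := by
  obtain rfl : K = singleCardKernel n := by
    ext i j
    rw [hK, singleCardKernel_apply]
    rcases lt_trichotomy i j with hij | rfl | hij
    · simp [hij.ne, hij.not_gt, max_eq_right (Fin.lt_def.1 hij).le, tailHarmonic, div_eq_inv_mul]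
    · simp [tailHarmonic, div_eq_inv_mul]
    · simp [hij.ne', hij, max_eq_left (Fin.lt_def.1 hij).le, tailHarmonic, div_eq_inv_mul]
  set c : ℝ := 1 - (n : ℝ)⁻¹
  have hrow := pow_row_eq_of_vecMul_eq_self (uniform_vecMul_singleCardKernel n) (c := c)
    (by rw [sub_sub_cancel]; exact singleCardKernel_bottom_row (by omega)) t
  have hentry : ∀ j, (singleCardKernel n ^ t) ⟨n - 1, by omega⟩ j - 1 / n =
      c ^ t * ((Pi.single ⟨n - 1, by omega⟩ 1 : Fin n → ℝ) j - (Fintype.card (Fin n) : ℝ)⁻¹) := by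
    intro j
    rw [hrow, Fintype.card_fin]
    simp only [Pi.add_apply, Pi.smul_apply, smul_eq_mul]
    ring
  have hc0 : 0 ≤ c := sub_nonneg.2 (inv_le_one_of_one_le₀ (by exact_mod_cast (by omega : 1 ≤ n)))
  simp_rw [hentry, abs_mul, abs_of_nonneg (pow_nonneg hc0 t), ← mul_sum,
    sum_abs_single_sub_inv_card, Fintype.card_fin, one_div, pow_succ]
  ring
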